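/- Construction from resolvable Steiner systems: if a resolvable Steiner system S(k,r,n) exists, then for every odd d with d ≤ r − k + 1 there exists an r-regular multipermutation code of length n with minimum r-regular Ulam distance at least d and cardinality (C(n-1,k-1)/C(r-1,k-1)) · (n/r)!. -/

import Mathlib

/-- The `r`-regular multipermutation associated with a permutation `π` of `Fin n`:
`mp n r π j` is the (0-indexed) rank block of element `j`, i.e. `⌊π⁻¹(j)/r⌋`. -/
def mp (n r : ℕ) (π : Equiv.Perm (Fin n)) (j : Fin n) : ℕ := (π.symm j : ℕ) / r

/-- The `i`-th part of the ordered set partition associated with `π`: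
the set of elements of rank block `i`. -/
def part (n r : ℕ) (π : Equiv.Perm (Fin n)) (i : ℕ) : Finset (Fin n) :=
  Finset.univ.filter fun j => mp n r π j = i

/-- The `r`-regular Hamming distance between permutations. -/
def hammR (n r : ℕ) (π σ : Equiv.Perm (Fin n)) : ℕ :=
  (Finset.univ.filter fun j => mp n r π j ≠ mp n r σ j).card

/-- Length of a longest common subsequence of two lists. -/
noncomputable def lcsLen {α : Type*} (A B : List α) : ℕ :=
  sSup {k | ∃ l : List α, l.length = k ∧ l.Sublist A ∧ l.Sublist B}

/-- Ulam distance between two lists of the same length (length minus LCS length). -/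
noncomputable def ulamList {α : Type*} (A B : List α) : ℕ := A.length - lcsLen A B

/-- The Ulam distance between two permutations of `Fin n`. -/
noncomputable def ulam (n : ℕ) (π σ : Equiv.Perm (Fin n)) : ℕ :=
  n - lcsLen (List.ofFn π) (List.ofFn σ)

/-- The `r`-regular Ulam distance: minimum Ulam distance between members of the
`≡_r`-equivalence classes of `π` and `σ`. -/
noncomputable def ulamR (n r : ℕ) (π σ : Equiv.Perm (Fin n)) : ℕ :=
  sInf {k | ∃ π' σ' : Equiv.Perm (Fin n),
    mp n r π' = mp n r π ∧ mp n r σ' = mp n r σ ∧ k = ulam n π' σ'}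

/-- The multipermutation code obtained from a resolution `cls` of a Steiner system:
codewords are all orderings of the partitions given by the resolution classes. -/
def steinerCode (n r m : ℕ) (cls : Fin m → Fin (n / r) → Finset (Fin n)) :
    Set (Equiv.Perm (Fin n)) :=
  {π | ∃ (i : Fin m) (g : Equiv.Perm (Fin (n / r))),
      ∀ j : Fin (n / r), part n r π (j : ℕ) = cls i (g j)}

/-!
A codeword is determined by a resolution class `c` and an ordering `g` of its blocks: its
multipermutation sends `x` to the rank under `g` of the block of `c` containing `x`. Distinct
pairs `(c, g)` give distinct multipermutations, because every block contains a `k`-set and so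
determines its place in the resolution; this gives the count `m · (n/r)!`.

For the distance, let `q = n/r` and take representatives `π, σ` of two distinct codewords. A
common subsequence of `π` and `σ` has non-decreasing ranks in both, so the pairs
(rank in `π`, rank in `σ`) of its elements form a chain in `[q] × [q]`. If the two classes
differ, each pair is shared by fewer than `k` elements (two blocks meet in fewer than `k` points),
and a chain has at most `2q - 1` points, so some `π`-rank is taken by fewer than `k` elements. If
the classes agree, the chain is the graph of `g₂⁻¹ g₁` over the ranks it meets; were all of them
met, `g₂⁻¹ g₁` would be monotone, hence trivial, so some rank is not taken at all. All other ranks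
are taken at most `r` times, so the subsequence is shorter than `(q - 1) r + k`, and the Ulam
distance is at least `r - k + 1`.
-/

open Finset

lemma lcsLen_le {α : Type*} {A B : List α} {N : ℕ}
    (h : ∀ l : List α, l.Sublist A → l.Sublist B → l.length ≤ N) : lcsLen A B ≤ N :=
  csSup_le ⟨0, [], rfl, List.nil_sublist _, List.nil_sublist _⟩ fun _ ⟨l, hl, hA, hB⟩ =>
    hl ▸ h l hA hB

section Multipermutation

variable {n r : ℕ}

lemma mp_lt_div (hdvd : r ∣ n) (π : Equiv.Perm (Fin n)) (x : Fin n) : mp n r π x < n / r :=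
  Nat.div_lt_div_of_lt_of_dvd hdvd (π.symm x).isLt

lemma mem_part_iff {π : Equiv.Perm (Fin n)} {i : ℕ} {x : Fin n} :
    x ∈ part n r π i ↔ mp n r π x = i := by
  simp [part]

lemma pairwise_mp_le_ofFn (π : Equiv.Perm (Fin n)) :
    (List.ofFn π).Pairwise fun x y => mp n r π x ≤ mp n r π y :=
  List.pairwise_ofFn.2 fun i j hij => by
    simpa only [mp, Equiv.symm_apply_apply] using Nat.div_le_div_right (c := r) hij.le

lemma exists_mp_eq {q : ℕ} (hr : 0 < r) (hn : q * r = n) (f : Fin n → Fin q)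
    (hf : ∀ i, #{x | f x = i} = r) :
    ∃ π : Equiv.Perm (Fin n), mp n r π = fun x => (f x : ℕ) := by
  have e : ∀ i, {x // f x = i} ≃ Fin r := fun i =>
    Fintype.equivFinOfCardEq (by rw [Fintype.card_subtype, hf])
  -- `x ↦ r * f x + (index of x in its fibre)`
  let E : Fin n ≃ Fin n := (Equiv.sigmaFiberEquiv f).symm.trans <|
    (Equiv.sigmaCongrRight e).trans <| (Equiv.sigmaEquivProd _ _).trans <|
      finProdFinEquiv.trans (finCongr hn)
  refine ⟨E.symm, funext fun x => ?_⟩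
  simp [mp, E, finProdFinEquiv, Nat.add_mul_div_left _ _ hr, Nat.div_eq_of_lt]

end Multipermutation

section Chains

variable {α β : Type*}

lemma isChain_image_of_pairwise [Preorder β] {l : List α} {f : α → β}
    (hl : l.Pairwise fun x y => f x ≤ f y) : IsChain (· ≤ ·) (f '' {x | x ∈ l}) := by
  have hcomp := List.Pairwise.forall_of_forall_of_flip (R := fun x y => f x ≤ f y ∨ f y ≤ f x)
    (fun _ _ => Or.inl le_rfl) (hl.imp Or.inl) (hl.imp Or.inr)
  rintro _ ⟨x, hx, rfl⟩ _ ⟨y, hy, rfl⟩ -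
  exact hcomp hx hy

lemma card_le_of_isChain {p q : ℕ} {T : Finset (Fin p × Fin q)}
    (hT : IsChain (· ≤ ·) (T : Set (Fin p × Fin q))) : #T ≤ p + q - 1 := by
  -- the coordinate sum is injective on a chain
  calc #T ≤ #(range (p + q - 1)) := by
        refine card_le_card_of_injOn (fun x => x.1.val + x.2.val) (fun x _ => ?_) ?_
        · simp only [coe_range, Set.mem_Iio]
          omega
        · intro x hx y hy hsum
          simp only at hsum
          by_contra hne
          rcases hT hx hy hne with h | h <;>
          · simp only [Prod.le_def, Fin.le_def] at h
            exact hne (Prod.ext (Fin.ext (by omega)) (Fin.ext (by omega)))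
    _ = p + q - 1 := card_range _

lemma exists_card_filter_lt_of_isChain {q k : ℕ} (hq : 0 < q) {s : Finset α} {a b : α → Fin q}
    (hs : IsChain (· ≤ ·) ((fun x => (a x, b x)) '' s))
    (hfiber : ∀ p, #{x ∈ s | (a x, b x) = p} < k) : ∃ i, #{x ∈ s | a x = i} < k := by
  by_contra! hrow
  set T := s.image fun x => (a x, b x)
  have hk : 0 < k := (Nat.zero_le _).trans_lt (hfiber (⟨0, hq⟩, ⟨0, hq⟩))
  have htwo : ∀ i, 2 ≤ #{p ∈ T | p.1 = i} := by
    intro i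
    rw [filter_image]
    dsimp only
    have hle := card_le_mul_card_image {x ∈ s | a x = i} (k - 1) fun p _ =>
      Nat.le_sub_one_of_lt ((card_le_card (filter_subset_filter _ (filter_subset _ s))).trans_lt
        (hfiber p))
    by_contra! hlt
    have := Nat.mul_le_mul_left (k - 1) (Nat.le_of_lt_succ hlt)
    have := hrow i
    omega
  have hsum : 2 * q ≤ #T := by
    rw [card_eq_sum_card_fiberwise (f := Prod.fst) (t := univ) fun _ _ => mem_univ _]
    simpa [mul_comm] using card_nsmul_le_sum univ _ 2 fun i _ => htwo i
  have := card_le_of_isChain (T := T) (by rwa [coe_image])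
  omega

lemma exists_forall_ne_of_isChain [LinearOrder β] [Finite β] {s : Finset α} {a : α → β}
    {h : Equiv.Perm β} (hh : h ≠ 1) (hs : IsChain (· ≤ ·) ((fun x => (a x, h (a x))) '' s)) :
    ∃ i, ∀ x ∈ s, a x ≠ i := by
  by_contra! hall
  have hmono : Monotone h := by
    intro i j hij
    obtain ⟨x, hx, rfl⟩ := hall i
    obtain ⟨y, hy, rfl⟩ := hall j
    rcases eq_or_ne (a x) (a y) with hxy | hxy
    · rw [hxy]
    rcases hs (Set.mem_image_of_mem _ hx) (Set.mem_image_of_mem _ hy) (by simp [hxy])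
      with h' | h'
    · exact h'.2
    · exact absurd (le_antisymm hij h'.1) hxy
  exact hh (Equiv.ext (congrFun (hmono.strictMono_of_injective h.injective).eq_id))

lemma card_lt_of_card_filter_lt {q r k : ℕ} {s : Finset α} {a : α → Fin q}
    (hrow : ∀ i, #{x ∈ s | a x = i} ≤ r) {i₀ : Fin q} (hi₀ : #{x ∈ s | a x = i₀} < k) :
    #s < (q - 1) * r + k := by
  rw [card_eq_sum_card_fiberwise (f := a) (t := univ) fun _ _ => mem_univ _,
    ← add_sum_erase _ _ (mem_univ i₀)]
  have := sum_le_card_nsmul (univ.erase i₀) _ r fun i _ => hrow i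
  rw [card_erase_of_mem (mem_univ _), card_univ, Fintype.card_fin, smul_eq_mul] at this
  omega

end Chains

section PartIndex

variable {ι α : Type*} {P : ι → Finset α}

noncomputable def partIndex (hP : ∀ x, ∃! i, x ∈ P i) (x : α) : ι := (hP x).exists.choose

lemma mem_iff_partIndex_eq (hP : ∀ x, ∃! i, x ∈ P i) {x : α} {i : ι} :
    x ∈ P i ↔ partIndex hP x = i :=
  ⟨fun h => (hP x).unique (hP x).exists.choose_spec h, fun h => h ▸ (hP x).exists.choose_spec⟩

end PartIndex

section SteinerCode

variable {n r k m : ℕ} {cls : Fin m → Fin (n / r) → Finset (Fin n)}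

/-- The codeword given by class `c` and ordering `g` puts block `cls c (g j)` in rank `j`. -/
noncomputable def blockRank (hpart : ∀ i x, ∃! j, x ∈ cls i j) (c : Fin m)
    (g : Equiv.Perm (Fin (n / r))) (x : Fin n) : Fin (n / r) :=
  g.symm (partIndex (hpart c) x)

variable (hpart : ∀ i x, ∃! j, x ∈ cls i j)

lemma mem_cls_iff_blockRank_eq {c : Fin m} {g : Equiv.Perm (Fin (n / r))} {x : Fin n}
    {j : Fin (n / r)} : x ∈ cls c (g j) ↔ blockRank hpart c g x = j := by
  rw [mem_iff_partIndex_eq (hpart c), blockRank, Equiv.symm_apply_eq]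

lemma mem_steinerCode_iff (hdvd : r ∣ n) {π : Equiv.Perm (Fin n)} :
    π ∈ steinerCode n r m cls ↔ ∃ c g, mp n r π = fun x => (blockRank hpart c g x : ℕ) := by
  refine exists_congr fun c => exists_congr fun g => ⟨fun h => funext fun x => ?_, fun h j => ?_⟩
  · have hx : x ∈ part n r π (⟨mp n r π x, mp_lt_div hdvd π x⟩ : Fin (n / r)) :=
      mem_part_iff.2 rfl
    rw [h, mem_cls_iff_blockRank_eq hpart] at hx
    rw [hx]
  · ext x
    rw [mem_part_iff, h, mem_cls_iff_blockRank_eq hpart, Fin.val_inj]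

lemma card_inter_lt (hsteiner : ∀ K : Finset (Fin n), #K = k → ∃! p : Fin m × Fin (n / r),
      K ⊆ cls p.1 p.2) {p p' : Fin m × Fin (n / r)} (hne : p ≠ p') :
    #(cls p.1 p.2 ∩ cls p'.1 p'.2) < k := by
  by_contra! h
  obtain ⟨K, hK, hKk⟩ := exists_subset_card_eq h
  exact hne ((hsteiner K hKk).unique (hK.trans inter_subset_left) (hK.trans inter_subset_right))

lemma image_mp_steinerCode (hr : 0 < r) (hdvd : r ∣ n) (hcard : ∀ i j, #(cls i j) = r) :
    (fun π => mp n r π) '' steinerCode n r m cls =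
      Set.range fun p : Fin m × Equiv.Perm (Fin (n / r)) =>
        fun x => (blockRank hpart p.1 p.2 x : ℕ) := by
  ext f
  simp only [Set.mem_image, mem_steinerCode_iff hpart hdvd, Set.mem_range, Prod.exists]
  constructor
  · rintro ⟨π, ⟨c, g, hπ⟩, rfl⟩
    exact ⟨c, g, hπ.symm⟩
  · rintro ⟨c, g, rfl⟩
    obtain ⟨π, hπ⟩ := exists_mp_eq hr (Nat.div_mul_cancel hdvd) (blockRank hpart c g) fun i => by
      simp_rw [← mem_cls_iff_blockRank_eq hpart, filter_mem_eq_inter, univ_inter, hcard]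
    exact ⟨π, ⟨c, g, hπ⟩, hπ⟩

lemma blockRank_injective (hsteiner : ∀ K : Finset (Fin n), #K = k → ∃! p : Fin m × Fin (n / r),
      K ⊆ cls p.1 p.2)
    (hq : 0 < n / r) (hkr : k ≤ r) (hcard : ∀ i j, #(cls i j) = r) :
    Function.Injective fun p : Fin m × Equiv.Perm (Fin (n / r)) =>
      fun x => (blockRank hpart p.1 p.2 x : ℕ) := by
  rintro ⟨c, g⟩ ⟨c', g'⟩ h
  have hblock : ∀ j, (c, g j) = (c', g' j) := by
    intro j
    by_contra hne
    have hcls : cls c (g j) = cls c' (g' j) := by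
      ext x
      rw [mem_cls_iff_blockRank_eq hpart, mem_cls_iff_blockRank_eq hpart, ← Fin.val_inj,
        ← Fin.val_inj]
      exact Eq.congr_left (congrFun h x)
    have := card_inter_lt hsteiner hne
    rw [← hcls, inter_self, hcard] at this
    omega
  have hc : c = c' := congrArg Prod.fst (hblock ⟨0, hq⟩)
  subst hc
  simpa [Equiv.ext_iff] using hblock

lemma length_lt_of_sublist (hsteiner : ∀ K : Finset (Fin n), #K = k → ∃! p : Fin m × Fin (n / r),
      K ⊆ cls p.1 p.2)
    (hq : 0 < n / r) (hk : 0 < k) (hcard : ∀ i j, #(cls i j) = r)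
    {c₁ c₂ : Fin m} {g₁ g₂ : Equiv.Perm (Fin (n / r))} (hne : (c₁, g₁) ≠ (c₂, g₂))
    {π σ : Equiv.Perm (Fin n)} (hπ : mp n r π = fun x => (blockRank hpart c₁ g₁ x : ℕ))
    (hσ : mp n r σ = fun x => (blockRank hpart c₂ g₂ x : ℕ)) {l : List (Fin n)}
    (hlπ : l.Sublist (List.ofFn π)) (hlσ : l.Sublist (List.ofFn σ)) :
    l.length < (n / r - 1) * r + k := by
  classical
  set a := blockRank hpart c₁ g₁
  set b := blockRank hpart c₂ g₂
  set s := l.toFinset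
  have hs : #s = l.length :=
    List.toFinset_card_of_nodup ((List.nodup_ofFn.2 π.injective).sublist hlπ)
  have hchain : IsChain (· ≤ ·) ((fun x => (a x, b x)) '' s) := by
    have h₁ := (pairwise_mp_le_ofFn (r := r) π).sublist hlπ
    have h₂ := (pairwise_mp_le_ofFn (r := r) σ).sublist hlσ
    rw [hπ] at h₁
    rw [hσ] at h₂
    rw [List.coe_toFinset]
    exact isChain_image_of_pairwise ((h₁.and h₂).imp fun h => Prod.mk_le_mk.2 h)
  have hrow : ∀ i, #{x ∈ s | a x = i} ≤ r := fun i =>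
    (card_le_card fun x hx => (mem_cls_iff_blockRank_eq hpart).2 (mem_filter.1 hx).2).trans_eq
      (hcard c₁ (g₁ i))
  obtain ⟨i, hi⟩ : ∃ i, #{x ∈ s | a x = i} < k := by
    rcases eq_or_ne c₁ c₂ with rfl | hc
    · have hb : b = fun x => (g₂⁻¹ * g₁) (a x) := by
        funext x
        simp [a, b, blockRank, Equiv.Perm.inv_def]
      have hg : g₂⁻¹ * g₁ ≠ 1 := fun h => hne (by rw [inv_mul_eq_one.1 h])
      obtain ⟨i, hi⟩ := exists_forall_ne_of_isChain hg (hb ▸ hchain)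
      exact ⟨i, by rwa [card_eq_zero.2 (filter_eq_empty_iff.2 hi)]⟩
    · refine exists_card_filter_lt_of_isChain hq hchain fun p =>
        (card_le_card fun x hx => ?_).trans_lt
          (card_inter_lt hsteiner (p := (c₁, g₁ p.1)) (p' := (c₂, g₂ p.2)) (by simp [hc]))
      obtain ⟨-, rfl⟩ := mem_filter.1 hx
      exact mem_inter.2
        ⟨(mem_cls_iff_blockRank_eq hpart).2 rfl, (mem_cls_iff_blockRank_eq hpart).2 rfl⟩
  rw [← hs]
  exact card_lt_of_card_filter_lt hrow hi

end SteinerCode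

theorem steiner_code_general (n r k d m : ℕ) (hn : 0 < n) (hr : 0 < r) (hk : 0 < k)
    (hkr : k ≤ r) (hdvd : r ∣ n) (hd : d ≤ r - k + 1)
    (cls : Fin m → Fin (n / r) → Finset (Fin n))
    (hcard : ∀ i j, (cls i j).card = r)
    (hpart : ∀ i : Fin m, ∀ x : Fin n, ∃! j, x ∈ cls i j)
    (hsteiner : ∀ K : Finset (Fin n), K.card = k →
      ∃! p : Fin m × Fin (n / r), K ⊆ cls p.1 p.2) :
    (∀ π ∈ steinerCode n r m cls, ∀ σ ∈ steinerCode n r m cls,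
      mp n r π ≠ mp n r σ → d ≤ ulamR n r π σ) ∧
    Nat.card {f : Fin n → ℕ // ∃ π ∈ steinerCode n r m cls, mp n r π = f} =
      m * Nat.factorial (n / r) := by
  have hq : 0 < n / r := Nat.div_pos (Nat.le_of_dvd hn hdvd) hr
  refine ⟨fun π hπ σ hσ hne => ?_, ?_⟩
  · obtain ⟨c₁, g₁, h₁⟩ := (mem_steinerCode_iff hpart hdvd).1 hπ
    obtain ⟨c₂, g₂, h₂⟩ := (mem_steinerCode_iff hpart hdvd).1 hσ
    have hne' : (c₁, g₁) ≠ (c₂, g₂) := fun h => hne (by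
      obtain ⟨rfl, rfl⟩ := Prod.ext_iff.1 h
      rw [h₁, h₂])
    refine le_csInf ⟨_, π, σ, rfl, rfl, rfl⟩ ?_
    rintro _ ⟨π', σ', hπ', hσ', rfl⟩
    have hlcs : lcsLen (List.ofFn π') (List.ofFn σ') ≤ (n / r - 1) * r + k - 1 :=
      lcsLen_le fun l hlπ hlσ => Nat.le_sub_one_of_lt <| length_lt_of_sublist hpart hsteiner hq hk
        hcard hne' (hπ'.trans h₁) (hσ'.trans h₂) hlπ hlσ
    have hn' : n / r * r = n := Nat.div_mul_cancel hdvd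
    rw [Nat.sub_one_mul] at hlcs
    have : r ≤ n / r * r := Nat.le_mul_of_pos_left r hq
    unfold ulam
    omega
  · change Nat.card ((fun π => mp n r π) '' steinerCode n r m cls) = _
    rw [image_mp_steinerCode hpart hr hdvd hcard,
      Nat.card_range_of_injective (blockRank_injective hpart hsteiner hq hkr hcard),
      Nat.card_prod, Nat.card_perm, Nat.card_fin, Nat.card_fin]

/-- Construction from resolvable Steiner systems: if a resolvable Steiner system
`S(k,r,n)` exists (with its `m = C(n-1,k-1)/C(r-1,k-1)` resolution classes given by
`cls`), then for every odd `d ≤ r − k + 1` the code consisting of all orderings of the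
resolution classes is an `r`-regular multipermutation code of length `n` with minimum
`r`-regular Ulam distance at least `d` and cardinality `m·(n/r)!`. -/
theorem steiner_code (n r k d m : ℕ) (hn : 0 < n) (hr : 0 < r) (hk : 0 < k)
    (hkr : k ≤ r) (hdvd : r ∣ n) (hodd : Odd d) (hd : d ≤ r - k + 1)
    (hm : m = Nat.choose (n - 1) (k - 1) / Nat.choose (r - 1) (k - 1))
    (cls : Fin m → Fin (n / r) → Finset (Fin n))
    (hcard : ∀ i j, (cls i j).card = r)
    (hpart : ∀ i : Fin m, ∀ x : Fin n, ∃! j, x ∈ cls i j)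
    (hsteiner : ∀ K : Finset (Fin n), K.card = k →
      ∃! p : Fin m × Fin (n / r), K ⊆ cls p.1 p.2) :
    (∀ π ∈ steinerCode n r m cls, ∀ σ ∈ steinerCode n r m cls,
      mp n r π ≠ mp n r σ → d ≤ ulamR n r π σ) ∧
    Nat.card {f : Fin n → ℕ // ∃ π ∈ steinerCode n r m cls, mp n r π = f} =
      m * Nat.factorial (n / r) :=
  steiner_code_general n r k d m hn hr hk hkr hdvd hd cls hcard hpart hsteiner
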